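/- For every irrational x ∈ (0,1), the sequence (Q_n(x))_{n≥1} of denominators of the SCF convergents of x is strictly increasing. -/

import Mathlib

open MeasureTheory Real Set Filter Topology

namespace SCF

/-- The involution `ι(x) = (1−x)/(1+x)`. -/
noncomputable def iota (x : ℝ) : ℝ := (1 - x) / (1 + x)

/-- Even continued-fraction step.  For `y ∈ (0,1/2]` one has
`⌊(1/y+1)/2⌋ = k` whenever `1/y ∈ (2k−1, 2k+1)`, so `Te y = |1/y − 2k|`;
explicitly `Te y = 1/y − 2` on `[1/3,1/2]`, `Te y = 1/y − 2k` on
`[1/(2k+1), 1/(2k))` and `Te y = 2k − 1/y` on `[1/(2k), 1/(2k−1))` (`k ≥ 2`). -/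
noncomputable def Te (y : ℝ) : ℝ := |1 / y - 2 * (⌊(1 / y + 1) / 2⌋ : ℝ)|

/-- The spliced continued fraction (SCF) map `T : [0,1] → [0,1]`, with
`T 0 = 0`, `T 1 = 1`.  On `(0,1/2]` it is the even continued fraction map
(see `Te`), and on `(1/2,1)` it is the odd–odd map, which is the conjugate
`ι ∘ Te ∘ ι` of the even map; this agrees with the branchwise definition:
`T x = (k x − (k−1))/(k − (k+1) x)` on `((k−1)/k, (2k−1)/(2k+1)]` and
`T x = (k − (k+1) x)/(k x − (k−1))` on `((2k−1)/(2k+1), k/(k+1)]` for `k ≥ 2`. -/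
noncomputable def T (x : ℝ) : ℝ :=
  if x ≤ 0 then 0
  else if 1 ≤ x then 1
  else if x ≤ 1 / 2 then Te x
  else iota (Te (iota x))

/-- Parity label of a digit: `e` (even cusp) or `o` (odd–odd cusp). -/
inductive Par | e | o
deriving DecidableEq

/-- A candidate SCF digit `(a, ε)_s`. -/
structure Digit where
  a : ℤ
  eps : ℤ
  s : Par
deriving DecidableEq

/-- The digit set `𝒜 = {(k,ε)_s : k ≥ 2, ε = ±1, s ∈ {e,o}} ∪ {(1,+1)_e}`. -/
def Digit.Valid (d : Digit) : Prop :=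
  (2 ≤ d.a ∧ (d.eps = 1 ∨ d.eps = -1)) ∨ (d.a = 1 ∧ d.eps = 1 ∧ d.s = Par.e)

/-- The branch intervals `I_{(a,ε)_s}` of the SCF map. -/
noncomputable def branch (d : Digit) : Set ℝ :=
  match d.s with
  | Par.e =>
      if d.a = 1 then Set.Icc (1/3 : ℝ) (1/2)
      else if d.eps = 1 then Set.Ico (1 / (2 * (d.a : ℝ) + 1)) (1 / (2 * (d.a : ℝ)))
      else Set.Ico (1 / (2 * (d.a : ℝ))) (1 / (2 * (d.a : ℝ) - 1))
  | Par.o =>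
      if d.eps = 1 then
        Set.Ioc ((2 * (d.a : ℝ) - 1) / (2 * (d.a : ℝ) + 1)) ((d.a : ℝ) / ((d.a : ℝ) + 1))
      else
        Set.Ioc (((d.a : ℝ) - 1) / (d.a : ℝ)) ((2 * (d.a : ℝ) - 1) / (2 * (d.a : ℝ) + 1))

open Classical in
/-- The SCF digit of a point `y` (the unique valid digit `d` with `y ∈ I_d`;
well defined for every `y ∈ (0,1)`). -/
noncomputable def digit (y : ℝ) : Digit :=
  if h : ∃ d : Digit, d.Valid ∧ y ∈ branch d then h.choose else ⟨1, 1, Par.e⟩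

/-- The `n`-th SCF digit `(a_n(x), ε_n(x))_{s_n(x)}` of `x`, `n ≥ 1`,
determined by `T^[n−1] x ∈ I_{(a_n,ε_n)_{s_n}}`. -/
noncomputable def dig (n : ℕ) (x : ℝ) : Digit := digit (T^[n - 1] x)

/-- The `n`-th SCF partial quotient `a_n(x)`. -/
noncomputable def a (n : ℕ) (x : ℝ) : ℤ := (dig n x).a

/-- The invariant density `f_μ`. -/
noncomputable def fdens (x : ℝ) : ℝ :=
  2 / (Real.log (2 + Real.sqrt 3) * (1 - (2 - Real.sqrt 3) * x) * (1 + Real.sqrt 3 * x))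

/-- The absolutely continuous `T`-invariant probability measure `μ` on `(0,1)`. -/
noncomputable def mu : Measure ℝ :=
  (volume.restrict (Set.Ioo (0 : ℝ) 1)).withDensity fun x => ENNReal.ofReal (fdens x)

/-- The inverse branches `h_{(a,ε)_s}` of the SCF map `T`. -/
noncomputable def h (d : Digit) (x : ℝ) : ℝ :=
  match d.s with
  | Par.e => 1 / (2 * (d.a : ℝ) + (d.eps : ℝ) * x)
  | Par.o =>
      if d.eps = 1 then (((d.a : ℝ) - 1) * x + (d.a : ℝ)) / ((d.a : ℝ) * x + ((d.a : ℝ) + 1))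
      else ((d.a : ℝ) * x + ((d.a : ℝ) - 1)) / (((d.a : ℝ) + 1) * x + (d.a : ℝ))

/-- Composed inverse branch `h_{A^{(n)}} = h_{A₁} ∘ ⋯ ∘ h_{A_n}` of a word. -/
noncomputable def hWord (l : List Digit) : ℝ → ℝ :=
  l.foldr (fun d g => h d ∘ g) id

/-- The dual inverse branches `bar h_{(b,η)_t}`. -/
noncomputable def hbar (d : Digit) (y : ℝ) : ℝ :=
  match d.s with
  | Par.e => (d.eps : ℝ) / (2 * (d.a : ℝ) + y)
  | Par.o =>
      1 / (1 + (d.eps : ℝ) / (((d.a : ℝ) - ((max 0 d.eps : ℤ) : ℝ)) + 1 / (1 + y)))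

/-- The matrix `M_{(a,ε)_s}` associated with the inverse branch `h_{(a,ε)_s}`. -/
noncomputable def Mdig (d : Digit) : Matrix (Fin 2) (Fin 2) ℝ :=
  match d.s with
  | Par.e => !![0, 1; (d.eps : ℝ), 2 * (d.a : ℝ)]
  | Par.o =>
      !![(d.a : ℝ) - ((max 0 d.eps : ℤ) : ℝ), (d.a : ℝ) - ((max 0 d.eps : ℤ) : ℝ) + (d.eps : ℝ);
         (d.a : ℝ) - ((max 0 d.eps : ℤ) : ℝ) + 1, (d.a : ℝ) - ((max 0 d.eps : ℤ) : ℝ) + (d.eps : ℝ) + 1]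

/-- `M_n(x) = M_{(a₁,ε₁)_{s₁}} ⋯ M_{(a_n,ε_n)_{s_n}}`. -/
noncomputable def Mn (n : ℕ) (x : ℝ) : Matrix (Fin 2) (Fin 2) ℝ :=
  ((List.range n).map fun i => Mdig (digit (T^[i] x))).prod

/-- `P_n(x)`: the `(1,2)`-entry of `M_n(x)` (numerator of the `n`-th convergent). -/
noncomputable def Pc (n : ℕ) (x : ℝ) : ℝ := Mn n x 0 1

/-- `Q_n(x)`: the `(2,2)`-entry of `M_n(x)` (denominator of the `n`-th convergent). -/
noncomputable def Qc (n : ℕ) (x : ℝ) : ℝ := Mn n x 1 1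

/-! The bottom row `(u, v)` of `M_n(x)` stays in the cone `0 < v, 0 < u + v`, and the right action
of every digit matrix maps this cone into itself while strictly increasing `v`: for
`N = M_{(a,ε)_s}` one has `v' - v = N₀₁ (u + v) + (N₁₁ - N₀₁ - 1) v` and
`u' + v' = (N₀₀ + N₀₁) (u + v) + (N₁₀ + N₁₁ - N₀₀ - N₀₁) v`, with all coefficients
nonnegative and the first ones positive. -/

section ConeExpanding

variable {R : Type*} [CommRing R] [LinearOrder R] [IsStrictOrderedRing R]

structure ConeExpanding (N : Matrix (Fin 2) (Fin 2) R) : Prop where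
  zero_one_pos : 0 < N 0 1
  zero_one_add_one_le : N 0 1 + 1 ≤ N 1 1
  zero_row_sum_pos : 0 < N 0 0 + N 0 1
  zero_row_sum_le : N 0 0 + N 0 1 ≤ N 1 0 + N 1 1

variable {M N : Matrix (Fin 2) (Fin 2) R}

theorem ConeExpanding.lt_mul_apply_one_one (hN : ConeExpanding N)
    (hv : 0 < M 1 1) (huv : 0 < M 1 0 + M 1 1) : M 1 1 < (M * N) 1 1 := by
  have hdiff : (M * N) 1 1 - M 1 1 = N 0 1 * (M 1 0 + M 1 1) + (N 1 1 - N 0 1 - 1) * M 1 1 := by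
    simp only [Matrix.mul_apply, Fin.sum_univ_two]; ring
  rw [← sub_pos, hdiff]
  exact add_pos_of_pos_of_nonneg (mul_pos hN.zero_one_pos huv)
    (mul_nonneg (by linarith [hN.zero_one_add_one_le]) hv.le)

theorem ConeExpanding.mul_apply_one_zero_add_pos (hN : ConeExpanding N)
    (hv : 0 < M 1 1) (huv : 0 < M 1 0 + M 1 1) : 0 < (M * N) 1 0 + (M * N) 1 1 := by
  have hsum : (M * N) 1 0 + (M * N) 1 1 = (N 0 0 + N 0 1) * (M 1 0 + M 1 1)
      + (N 1 0 + N 1 1 - (N 0 0 + N 0 1)) * M 1 1 := by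
    simp only [Matrix.mul_apply, Fin.sum_univ_two]; ring
  rw [hsum]
  exact add_pos_of_pos_of_nonneg (mul_pos hN.zero_row_sum_pos huv)
    (mul_nonneg (sub_nonneg.2 hN.zero_row_sum_le) hv.le)

end ConeExpanding

theorem coneExpanding_Mdig {d : Digit} (hd : d.Valid) : ConeExpanding (Mdig d) := by
  obtain ⟨k, eps, s⟩ := d
  rcases hd with ⟨hk, heps⟩ | ⟨rfl, rfl, rfl⟩
  · have hk : (2 : ℝ) ≤ k := by exact_mod_cast hk
    rcases heps with rfl | rfl <;> cases s <;> constructor <;> simp [Mdig] <;> linarith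
  · constructor <;> norm_num [Mdig]

theorem digit_valid (y : ℝ) : (digit y).Valid := by
  unfold digit
  split_ifs with h
  · exact h.choose_spec.1
  · exact Or.inr ⟨rfl, rfl, rfl⟩

theorem Mn_succ (n : ℕ) (x : ℝ) : Mn (n + 1) x = Mn n x * Mdig (digit (T^[n] x)) := by
  simp only [Mn, List.range_succ, List.map_append, List.prod_append, List.map_singleton,
    List.prod_singleton]

theorem Mn_bottom_row_pos (n : ℕ) (x : ℝ) : 0 < Qc n x ∧ 0 < Mn n x 1 0 + Qc n x := by
  induction n with
  | zero => simp [Qc, Mn]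
  | succ n ih =>
    have hN := coneExpanding_Mdig (digit_valid (T^[n] x))
    simp only [Qc, Mn_succ] at ih ⊢
    exact ⟨ih.1.trans (hN.lt_mul_apply_one_one ih.1 ih.2), hN.mul_apply_one_zero_add_pos ih.1 ih.2⟩

theorem Qc_lt_Qc_succ (n : ℕ) (x : ℝ) : Qc n x < Qc (n + 1) x := by
  obtain ⟨hv, huv⟩ := Mn_bottom_row_pos n x
  simp only [Qc, Mn_succ] at hv huv ⊢
  exact (coneExpanding_Mdig (digit_valid _)).lt_mul_apply_one_one hv huv

/-- for every irrational `x ∈ (0,1)` the sequence `(Q_n(x))_{n ≥ 1}`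
of denominators of the SCF convergents is strictly increasing. -/
theorem Qc_strictMono :
    ∀ x ∈ Set.Ioo (0 : ℝ) 1, Irrational x →
      StrictMono (fun n : ℕ => Qc (n + 1) x) := by
  intro x _ _
  exact strictMono_nat_of_lt_succ fun n => Qc_lt_Qc_succ (n + 1) x

end SCF
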